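/- arXiv:2305.03946 — 2 statements merged into one kernel-verified Lean document; each statement's English description precedes it below -/
import Mathlib

section
/- There exists a constant C ∈ ℕ (independent of r, P, T, S and the square) such that the following holds: if S is an optimal solution, then for every axis-aligned closed square q of side length r/√2, the number of sensors s ∈ S with s ∈ q and dist(s, P) ≥ r/2 is at most C. -/
/-- The set of points covered by a finite set `S` of sensors with sensing
radius `r` includes every target: for each `t ∈ T` there is `s ∈ S` with
`dist s t ≤ r`. -/
def Covers (r : ℝ) (T : Set (EuclideanSpace ℝ (Fin 2)))
    (S : Finset (EuclideanSpace ℝ (Fin 2))) : Prop :=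
  ∀ t ∈ T, ∃ s ∈ S, dist s t ≤ r

/-- The total moving cost of a sensor set `S`: each sensor moves from its
nearest station in `P`. -/
noncomputable def cost (P S : Finset (EuclideanSpace ℝ (Fin 2))) : ℝ :=
  ∑ s ∈ S, Metric.infDist s (P : Set (EuclideanSpace ℝ (Fin 2)))

/-- `S` is an optimal solution: it covers `T` and has minimum cost among all
finite sensor sets covering `T`. -/
def Optimal (r : ℝ) (P : Finset (EuclideanSpace ℝ (Fin 2)))
    (T : Set (EuclideanSpace ℝ (Fin 2)))
    (S : Finset (EuclideanSpace ℝ (Fin 2))) : Prop :=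
  Covers r T S ∧
    ∀ S' : Finset (EuclideanSpace ℝ (Fin 2)), Covers r T S' → cost P S ≤ cost P S'

/-! Suppose the square holds sensors far from the stations, and let `s₀` be the one among them
nearest to the stations, at distance `m ≥ r / 2`. The square has diameter `r`, so every target
served by one of these sensors lies within `2r` of `s₀`, and nine discs of radius `r` centred
within `2r` of `s₀` cover that disc. Each of the nine new sensors costs at most `m + 2r ≤ 5m`,
while each replaced sensor costs at least `m`; optimality therefore allows at most `45` of them.
-/

open Finset Metric

local notation "ℝ²" => EuclideanSpace ℝ (Fin 2)

lemma cost_union_le (P A B : Finset ℝ²) : cost P (A ∪ B) ≤ cost P A + cost P B := by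
  unfold cost
  rw [← sum_union_inter]
  exact le_add_of_nonneg_right (sum_nonneg fun _ _ => infDist_nonneg)

lemma Optimal.cost_le_of_covers {r : ℝ} {P S B N : Finset ℝ²} {T : Set ℝ²}
    (hS : Optimal r P T S) (hBS : B ⊆ S)
    (hN : ∀ b ∈ B, ∀ t, dist b t ≤ r → ∃ x ∈ N, dist x t ≤ r) :
    cost P B ≤ cost P N := by
  have hcover : Covers r T (S \ B ∪ N) := by
    intro t ht
    obtain ⟨s, hs, hst⟩ := hS.1 t ht
    by_cases hsB : s ∈ B
    · obtain ⟨x, hx, hxt⟩ := hN s hsB t hst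
      exact ⟨x, mem_union_right _ hx, hxt⟩
    · exact ⟨s, mem_union_left _ (mem_sdiff.2 ⟨hs, hsB⟩), hst⟩
  have hsplit : cost P (S \ B) + cost P B = cost P S := sum_sdiff hBS
  linarith [hS.2 _ hcover, cost_union_le P (S \ B) N]

lemma dist_le_sqrt_two_mul_of_abs_sub_le {x y : ℝ²} {a : ℝ}
    (h0 : |x 0 - y 0| ≤ a) (h1 : |x 1 - y 1| ≤ a) : dist x y ≤ √2 * a := by
  have ha : 0 ≤ a := (abs_nonneg _).trans h0
  rw [EuclideanSpace.dist_eq, Fin.sum_univ_two, Real.dist_eq, Real.dist_eq, sq_abs, sq_abs,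
    ← Real.sqrt_sq ha, ← Real.sqrt_mul zero_le_two]
  gcongr
  nlinarith [sq_le_sq' (abs_le.1 h0).1 (abs_le.1 h0).2, sq_le_sq' (abs_le.1 h1).1 (abs_le.1 h1).2]

lemma dist_le_of_mem_square {x₀ y₀ w : ℝ} {x y : ℝ²}
    (hx0 : x 0 ∈ Set.Icc x₀ (x₀ + w)) (hx1 : x 1 ∈ Set.Icc y₀ (y₀ + w))
    (hy0 : y 0 ∈ Set.Icc x₀ (x₀ + w)) (hy1 : y 1 ∈ Set.Icc y₀ (y₀ + w)) :
    dist x y ≤ √2 * w :=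
  dist_le_sqrt_two_mul_of_abs_sub_le
    (abs_sub_le_iff.2 ⟨by linarith [hx0.2, hy0.1], by linarith [hx0.1, hy0.2]⟩)
    (abs_sub_le_iff.2 ⟨by linarith [hx1.2, hy1.1], by linarith [hx1.1, hy1.2]⟩)

lemma exists_abs_sub_le_of_abs_le {r d : ℝ} (hd : |d| ≤ 2 * r) :
    ∃ o ∈ ({-(4 * r / 3), 0, 4 * r / 3} : Finset ℝ), |d - o| ≤ 2 * r / 3 := by
  rw [abs_le] at hd
  simp only [mem_insert, mem_singleton, exists_eq_or_imp, exists_eq_left, abs_le]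
  by_cases h₁ : d ≤ -(2 * r / 3)
  · left; constructor <;> linarith
  by_cases h₂ : d ≤ 2 * r / 3
  · right; left; constructor <;> linarith
  · right; right; constructor <;> linarith

/-- The centres are the `3 × 3` grid of mesh `4r/3` around `c`. -/
lemma exists_card_le_nine_cover (c : ℝ²) {r : ℝ} (hr : 0 ≤ r) :
    ∃ N : Finset ℝ², #N ≤ 9 ∧ (∀ x ∈ N, dist x c ≤ 2 * r) ∧
      ∀ t, dist t c ≤ 2 * r → ∃ x ∈ N, dist x t ≤ r := by
  set O : Finset ℝ := {-(4 * r / 3), 0, 4 * r / 3}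
  have hO : ∀ o ∈ O, |o| ≤ 4 * r / 3 := by
    simp only [O, mem_insert, mem_singleton]
    rintro o (rfl | rfl | rfl) <;> rw [abs_le] <;> constructor <;> linarith
  refine ⟨(O ×ˢ O).image fun o => c + !₂[o.1, o.2], ?_, ?_, ?_⟩
  · calc #((O ×ˢ O).image _) ≤ #O * #O := card_image_le.trans (card_product O O).le
      _ ≤ 3 * 3 := Nat.mul_le_mul card_le_three card_le_three
  · simp only [mem_image, mem_product, Prod.exists]
    rintro _ ⟨a, b, ⟨ha, hb⟩, rfl⟩
    calc dist _ c ≤ √2 * (4 * r / 3) := dist_le_sqrt_two_mul_of_abs_sub_le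
            (by simpa using hO a ha) (by simpa using hO b hb)
      _ ≤ 2 * r := by nlinarith [Real.sqrt_two_lt_three_halves]
  · intro t ht
    obtain ⟨a, ha, hta⟩ := exists_abs_sub_le_of_abs_le
      (((PiLp.dist_apply_le t c 0).trans ht).trans_eq' (Real.dist_eq _ _).symm)
    obtain ⟨b, hb, htb⟩ := exists_abs_sub_le_of_abs_le
      (((PiLp.dist_apply_le t c 1).trans ht).trans_eq' (Real.dist_eq _ _).symm)
    refine ⟨c + !₂[a, b], mem_image.2 ⟨(a, b), mem_product.2 ⟨ha, hb⟩, rfl⟩, ?_⟩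
    calc dist _ t ≤ √2 * (2 * r / 3) := dist_le_sqrt_two_mul_of_abs_sub_le
            (by rw [abs_sub_comm]; simpa [sub_sub] using hta)
            (by rw [abs_sub_comm]; simpa [sub_sub] using htb)
      _ ≤ r := by nlinarith [Real.sqrt_two_lt_three_halves]

theorem stmt_7 :
    ∃ C : ℕ, ∀ (r : ℝ), 0 < r →
      ∀ (P : Finset (EuclideanSpace ℝ (Fin 2))), P.Nonempty →
      ∀ (T : Set (EuclideanSpace ℝ (Fin 2)))
        (S : Finset (EuclideanSpace ℝ (Fin 2))), Optimal r P T S →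
      ∀ x₀ y₀ : ℝ,
        {s : EuclideanSpace ℝ (Fin 2) | s ∈ S ∧
            s 0 ∈ Set.Icc x₀ (x₀ + r / Real.sqrt 2) ∧
            s 1 ∈ Set.Icc y₀ (y₀ + r / Real.sqrt 2) ∧
            r / 2 ≤ Metric.infDist s (P : Set (EuclideanSpace ℝ (Fin 2)))}.ncard
          ≤ C := by
  refine ⟨45, fun r hr P _ T S hS x₀ y₀ => ?_⟩
  set B := S.filter fun s => s 0 ∈ Set.Icc x₀ (x₀ + r / √2) ∧
    s 1 ∈ Set.Icc y₀ (y₀ + r / √2) ∧ r / 2 ≤ infDist s P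
  refine le_of_eq_of_le (by rw [← Set.ncard_coe_finset]; congr 1; ext; simp [B]) (?_ : #B ≤ 45)
  rcases B.eq_empty_or_nonempty with hB | hB
  · simp [hB]
  obtain ⟨s₀, hs₀, hmin⟩ := B.exists_min_image (infDist · P) hB
  set m := infDist s₀ P
  have hm : r / 2 ≤ m := (mem_filter.1 hs₀).2.2.2
  have hB_near : ∀ b ∈ B, dist b s₀ ≤ r := fun b hb => by
    obtain ⟨-, hb0, hb1, -⟩ := mem_filter.1 hb
    obtain ⟨-, h0, h1, -⟩ := mem_filter.1 hs₀
    simpa [mul_div_cancel₀] using dist_le_of_mem_square hb0 hb1 h0 h1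
  obtain ⟨N, hN, hN_near, hN_cover⟩ := exists_card_le_nine_cover s₀ hr.le
  have hBN : cost P B ≤ cost P N := hS.cost_le_of_covers (filter_subset _ _) fun b hb t hbt =>
    hN_cover t <| (dist_triangle_left t s₀ b).trans <| by linarith [hB_near b hb]
  have hN_cost : cost P N ≤ #N * (m + 2 * r) := by
    rw [← nsmul_eq_mul]
    exact sum_le_card_nsmul _ _ _ fun x hx =>
      infDist_le_infDist_add_dist.trans (by linarith [hN_near x hx])
  have hcard : (#B : ℝ) * m ≤ 45 * m := calc
    (#B : ℝ) * m ≤ cost P B := by rw [← nsmul_eq_mul]; exact card_nsmul_le_sum _ _ _ hmin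
    _ ≤ #N * (m + 2 * r) := hBN.trans hN_cost
    _ ≤ 9 * (5 * m) := by
      gcongr
      exacts [by linarith, by exact_mod_cast hN, by linarith]
    _ = 45 * m := by ring
  exact_mod_cast le_of_mul_le_mul_right hcard (by linarith)
end

section
/- For every integer k ≥ 2, every r > 0 and every α > 0, there exists β₀ > 0 such that for all β with 0 < β ≤ β₀ the following holds. Let u_j = (cos(2πj/k), sin(2πj/k)) for j = 0, …, k−1, let the target set be T = {α·u_j : 0 ≤ j < k}, and let the station set be P = {(r + α + β)·u_j : 0 ≤ j < k}. Then: (i) the finite set {(r + α)·u_j : 0 ≤ j < k} covers T and has cost at most k·β; and (ii) every finite set S ⊆ ℝ² that covers T and has cost at most k·β satisfies |S| ≥ k. In particular, every optimal solution uses at least k sensors. -/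
/-!
The sensors `(r + α) • u j` are at distance `r` from their targets and `β` from their stations.
Conversely, if fewer than `k` sensors cover the `k` targets, one sensor `s` covers two of them,
`α • u i` and `α • u j`. Then `s` is within `r` of their midpoint, whose norm is at most
`α cos (π / k)`, so `s` is at distance at least `β + α (1 - cos (π / k))` from every station (the
stations lie on the circle of radius `r + α + β`). This single term of the cost already exceeds
`k β` once `β ≤ α (1 - cos (π / k)) / k`.
-/

open Real Metric Finset

local notation "ℝ²" => EuclideanSpace ℝ (Fin 2)

lemma norm_eq_one_of_ofLp_eq_cos_sin {v : ℝ²} {x : ℝ} (hv : v.ofLp = ![cos x, sin x]) :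
    ‖v‖ = 1 := by
  simp [EuclideanSpace.norm_eq, Fin.sum_univ_two, hv]

lemma inner_eq_cos_sub_of_ofLp_eq {v w : ℝ²} {x y : ℝ} (hv : v.ofLp = ![cos x, sin x])
    (hw : w.ofLp = ![cos y, sin y]) : inner ℝ v w = cos (x - y) := by
  simp [PiLp.inner_apply, Fin.sum_univ_two, hv, hw, cos_sub, mul_comm]

lemma cos_le_cos_of_mem_Icc_two_pi_sub {c x : ℝ} (hc : 0 ≤ c) (hcx : c ≤ x)
    (hx : x ≤ 2 * π - c) : cos x ≤ cos c := by
  rcases le_or_gt x π with hxπ | hπx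
  · exact cos_le_cos_of_nonneg_of_le_pi hc hxπ hcx
  · rw [← cos_two_pi_sub]
    exact cos_le_cos_of_nonneg_of_le_pi hc (by linarith) (by linarith)

lemma cos_two_pi_mul_div_le {m k : ℕ} (hm : 0 < m) (hmk : m < k) :
    cos (2 * π * m / k) ≤ cos (2 * π / k) := by
  have hk : (0 : ℝ) < k := by exact_mod_cast hm.trans hmk
  have hm1 : (1 : ℝ) ≤ m := by exact_mod_cast hm
  have hmk1 : (m : ℝ) + 1 ≤ k := by exact_mod_cast hmk
  apply cos_le_cos_of_mem_Icc_two_pi_sub (by positivity)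
  · apply div_le_div_of_nonneg_right _ hk.le
    nlinarith [pi_pos]
  · rw [le_sub_iff_add_le, ← add_div, div_le_iff₀ hk]
    nlinarith [pi_pos]

lemma cos_sub_le_cos_two_pi_div {i j k : ℕ} (hi : i < k) (hj : j < k) (hij : i ≠ j) :
    cos (2 * π * i / k - 2 * π * j / k) ≤ cos (2 * π / k) := by
  wlog hji : j < i generalizing i j
  · rw [← cos_neg, neg_sub]
    exact this hj hi hij.symm (by omega)
  have hsub : 2 * π * i / k - 2 * π * j / k = 2 * π * ((i - j : ℕ) : ℝ) / k := by
    rw [Nat.cast_sub hji.le]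
    ring
  rw [hsub]
  exact cos_two_pi_mul_div_le (by omega) (by omega)

lemma cos_pi_div_mem_Ico {k : ℕ} (hk : 2 ≤ k) : cos (π / k) ∈ Set.Ico 0 1 := by
  have hk0 : (0 : ℝ) < k := by positivity
  have hπk : π / k ≤ π / 2 := div_le_div_of_nonneg_left pi_pos.le two_pos (by exact_mod_cast hk)
  refine ⟨cos_nonneg_of_mem_Icc ⟨by linarith [pi_pos, div_pos pi_pos hk0], hπk⟩, ?_⟩
  simpa using cos_lt_cos_of_nonneg_of_le_pi le_rfl (by linarith [pi_pos]) (by positivity)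

lemma norm_le_of_dist_le_of_dist_le {E : Type*} [SeminormedAddCommGroup E] [NormedSpace ℝ E]
    {s a b : E} {r : ℝ} (ha : dist s a ≤ r) (hb : dist s b ≤ r) : ‖s‖ ≤ r + ‖a + b‖ / 2 := by
  rw [dist_eq_norm] at ha hb
  have h : (2 : ℝ) • s = (s - a) + (s - b) + (a + b) := by rw [two_smul]; abel
  have h2 : 2 * ‖s‖ ≤ ‖s - a‖ + ‖s - b‖ + ‖a + b‖ := by
    calc 2 * ‖s‖ = ‖(2 : ℝ) • s‖ := by rw [norm_smul, Real.norm_two]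
      _ ≤ _ := h ▸ (norm_add₃_le ..)
  linarith

lemma infDist_le_cost {P S : Finset ℝ²} {s : ℝ²} (hs : s ∈ S) :
    infDist s (P : Set ℝ²) ≤ cost P S :=
  single_le_sum (f := fun x => infDist x (P : Set ℝ²)) (fun _ _ => infDist_nonneg) hs

lemma cost_le_card_mul {P S : Finset ℝ²} {c : ℝ} (h : ∀ s ∈ S, ∃ p ∈ P, dist s p ≤ c) :
    cost P S ≤ S.card * c := by
  rw [← nsmul_eq_mul]
  refine sum_le_card_nsmul _ _ _ fun s hs => ?_
  obtain ⟨p, hp, hsp⟩ := h s hs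
  exact (infDist_le_dist_of_mem (mem_coe.2 hp)).trans hsp

lemma exists_dist_le_of_covers_of_card_lt {k : ℕ} {r : ℝ} {f : ℕ → ℝ²} {S : Finset ℝ²}
    (hS : Covers r {t | ∃ j : ℕ, j < k ∧ t = f j} S) (hcard : S.card < k) :
    ∃ s ∈ S, ∃ i < k, ∃ j < k, i ≠ j ∧ dist s (f i) ≤ r ∧ dist s (f j) ≤ r := by
  choose! g hgS hg using fun j (hj : j ∈ range k) => hS (f j) ⟨j, mem_range.1 hj, rfl⟩
  obtain ⟨i, hi, j, hj, hij, hgij⟩ :=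
    exists_ne_map_eq_of_card_lt_of_maps_to (by simpa using hcard) fun j hj => hgS j hj
  exact ⟨g i, hgS i hi, i, mem_range.1 hi, j, mem_range.1 hj, hij, hg i hi, hgij ▸ hg j hj⟩

section RegularPolygon

variable {k : ℕ} {u : ℕ → ℝ²}
  (hu : ∀ j : ℕ, u j = ![Real.cos (2 * Real.pi * j / k), Real.sin (2 * Real.pi * j / k)])
include hu

lemma norm_vertex (j : ℕ) : ‖u j‖ = 1 := norm_eq_one_of_ofLp_eq_cos_sin (hu j)

lemma norm_add_vertex_le {i j : ℕ} (hi : i < k) (hj : j < k) (hij : i ≠ j) :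
    ‖u i + u j‖ ≤ 2 * cos (π / k) := by
  have hcos : 0 ≤ cos (π / k) := (cos_pi_div_mem_Ico (by omega)).1
  have hcos2 : cos (2 * π / k) = 2 * cos (π / k) ^ 2 - 1 := by
    rw [mul_div_assoc, cos_two_mul]
  rw [← pow_le_pow_iff_left₀ (norm_nonneg _) (by positivity) two_ne_zero, norm_add_sq_real,
    norm_vertex hu, norm_vertex hu,
    inner_eq_cos_sub_of_ofLp_eq (hu i) (hu j)]
  nlinarith [cos_sub_le_cos_two_pi_div hi hj hij]

lemma dist_smul_vertex (a b : ℝ) (j : ℕ) : dist (a • u j) (b • u j) = |a - b| := by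
  rw [dist_eq_norm, ← sub_smul, norm_smul, norm_vertex hu, Real.norm_eq_abs, mul_one]

lemma covers_scaled_vertices {r α : ℝ} (hr : 0 ≤ r) :
    Covers r {t | ∃ j : ℕ, j < k ∧ t = α • u j} ((range k).image fun j => (r + α) • u j) := by
  rintro _ ⟨j, hj, rfl⟩
  refine ⟨(r + α) • u j, mem_image_of_mem _ (mem_range.2 hj), ?_⟩
  rw [dist_smul_vertex hu, add_sub_cancel_right, abs_of_nonneg hr]

lemma cost_scaled_vertices_le {r α β : ℝ} (hβ : 0 ≤ β) :
    cost ((range k).image fun j => (r + α + β) • u j) ((range k).image fun j => (r + α) • u j)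
      ≤ k * β := by
  refine (cost_le_card_mul (c := β) ?_).trans ?_
  · simp only [mem_image, mem_range, forall_exists_index, and_imp]
    rintro _ j hj rfl
    refine ⟨(r + α + β) • u j, ⟨j, hj, rfl⟩, ?_⟩
    rw [dist_smul_vertex hu, abs_sub_comm, add_sub_cancel_left, abs_of_nonneg hβ]
  · gcongr
    exact_mod_cast card_image_le.trans (card_range k).le

lemma add_mul_one_sub_cos_le_cost {r α β : ℝ} (hα : 0 ≤ α) {S : Finset ℝ²}
    (hS : Covers r {t | ∃ j : ℕ, j < k ∧ t = α • u j} S) (hcard : S.card < k) :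
    β + α * (1 - cos (π / k)) ≤ cost ((range k).image fun j => (r + α + β) • u j) S := by
  obtain ⟨s, hs, i, hi, j, hj, hij, hsi, hsj⟩ := exists_dist_le_of_covers_of_card_lt hS hcard
  have hs_norm : ‖s‖ ≤ r + α * cos (π / k) := by
    refine (norm_le_of_dist_le_of_dist_le hsi hsj).trans ?_
    rw [← smul_add, norm_smul, Real.norm_eq_abs, abs_of_nonneg hα]
    nlinarith [norm_add_vertex_le hu hi hj hij]
  refine le_trans ?_ (infDist_le_cost hs)
  refine (le_infDist ⟨_, mem_coe.2 (mem_image_of_mem _ (mem_range.2 hi))⟩).2 ?_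
  simp only [coe_image, coe_range, Set.mem_image, Set.mem_Iio]
  rintro _ ⟨l, -, rfl⟩
  have hp : r + α + β ≤ ‖(r + α + β) • u l‖ := by
    rw [norm_smul, norm_vertex hu, mul_one]
    exact le_norm_self _
  linarith [norm_sub_norm_le ((r + α + β) • u l) s, norm_sub_rev s ((r + α + β) • u l),
    dist_eq_norm s ((r + α + β) • u l)]

end RegularPolygon

open Classical in
theorem stmt_14 (k : ℕ) (hk : 2 ≤ k) (r α : ℝ) (hr : 0 < r) (hα : 0 < α) :
    ∃ β₀ > (0 : ℝ), ∀ β : ℝ, 0 < β → β ≤ β₀ →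
      ∀ u : ℕ → EuclideanSpace ℝ (Fin 2),
        (∀ j : ℕ, u j = ![Real.cos (2 * Real.pi * j / k),
            Real.sin (2 * Real.pi * j / k)]) →
        ∀ T : Set (EuclideanSpace ℝ (Fin 2)),
          T = {t | ∃ j : ℕ, j < k ∧ t = α • u j} →
        ∀ P : Finset (EuclideanSpace ℝ (Fin 2)),
          P = (Finset.range k).image (fun j => (r + α + β) • u j) →
        (Covers r T ((Finset.range k).image (fun j => (r + α) • u j)) ∧
          cost P ((Finset.range k).image (fun j => (r + α) • u j)) ≤ k * β) ∧
        (∀ S : Finset (EuclideanSpace ℝ (Fin 2)),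
          Covers r T S → cost P S ≤ k * β → k ≤ S.card) := by
  have hk0 : (0 : ℝ) < k := by positivity
  set D := α * (1 - cos (π / k))
  have hD : 0 < D := mul_pos hα (sub_pos.2 (cos_pi_div_mem_Ico hk).2)
  refine ⟨D / k, by positivity, fun β hβ hβ₀ u hu T hT P hP => ?_⟩
  subst hT hP
  refine ⟨⟨covers_scaled_vertices hu hr.le, cost_scaled_vertices_le hu hβ.le⟩, fun S hS hcost => ?_⟩
  by_contra! hcard
  have hkβ : k * β ≤ D := by rwa [le_div_iff₀' hk0] at hβ₀
  linarith [add_mul_one_sub_cos_le_cost hu (β := β) hα.le hS hcard]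
end
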